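/- The monoid Θ¹ of alternating words under merge-concatenation is isomorphic, as a monoid, to the monoid presented by two generators a, b subject to the relations a·a = a and b·b = b (the free monoid on {a,b} modulo these relations); under the isomorphism the generators a and b correspond to the two one-letter words. -/

import Mathlib

/-- Θ¹: the type of alternating words over the two-letter alphabet (modeled as `Bool`):
lists in which no two adjacent letters are equal. -/
def Theta1 : Type := {w : List Bool // List.Chain' (· ≠ ·) w}

/-- Merge-concatenation of two words. -/
def merge (σ τ : List Bool) : List Bool :=
  if σ = [] then τ
  else if τ = [] then σ
  else if σ.getLast? = τ.head? then σ ++ τ.tail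
  else σ ++ τ

/-- The defining relations: `a·a = a` and `b·b = b` for the two generators. -/
def idemRels : FreeMonoid Bool → FreeMonoid Bool → Prop := fun x y =>
  (x = FreeMonoid.of false * FreeMonoid.of false ∧ y = FreeMonoid.of false) ∨
  (x = FreeMonoid.of true * FreeMonoid.of true ∧ y = FreeMonoid.of true)

/-!
Merge-concatenation is associative with the empty word as unit, and each one-letter word is
idempotent, so sending the generators to the one-letter words defines a monoid map from the presented monoid to Θ¹.
Its inverse reads an alternating word as a product of generators: left multiplication by a
one-letter word `[c]` prepends `c` to an alternating word unless the word already starts with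
`c`, in which case `c·c = c` absorbs it, so both composites are the identity.
-/

theorem merge_nil_left (τ : List Bool) : merge [] τ = τ := by simp [merge]

theorem merge_nil_right (σ : List Bool) : merge σ [] = σ := by
  by_cases h : σ = [] <;> simp [merge, h]

theorem merge_of_ne_nil {σ τ : List Bool} (hσ : σ ≠ []) (hτ : τ ≠ []) :
    merge σ τ = σ ++ if σ.getLast? = τ.head? then τ.tail else τ := by
  simp only [merge, hσ, hτ, if_false]
  split_ifs <;> rfl

theorem merge_ne_nil {σ : List Bool} (hσ : σ ≠ []) (τ : List Bool) : merge σ τ ≠ [] := by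
  rcases eq_or_ne τ [] with rfl | hτ
  · rwa [merge_nil_right]
  · simp [merge_of_ne_nil hσ hτ, hσ]

theorem merge_singleton (b : Bool) (w : List Bool) :
    merge [b] w = if w.head? = some b then w else b :: w := by
  rcases w with _ | ⟨c, t⟩
  · rfl
  · by_cases h : c = b
    · subst h; simp [merge]
    · simp [merge, h, Ne.symm h]

theorem getLast?_merge (σ : List Bool) {τ : List Bool} (hτ : τ ≠ []) :
    (merge σ τ).getLast? = τ.getLast? := by
  rcases eq_or_ne σ [] with rfl | hσ
  · rw [merge_nil_left]
  obtain ⟨t, ts, rfl⟩ := List.exists_cons_of_ne_nil hτ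
  rw [merge_of_ne_nil hσ hτ]
  split_ifs with h
  · rcases ts with _ | ⟨u, us⟩
    · simpa using h
    · rw [List.tail_cons, List.getLast?_append_of_ne_nil _ (List.cons_ne_nil u us),
        List.getLast?_cons_cons]
  · exact List.getLast?_append_of_ne_nil _ hτ

theorem merge_assoc (σ τ ρ : List Bool) : merge (merge σ τ) ρ = merge σ (merge τ ρ) := by
  rcases eq_or_ne σ [] with rfl | hσ
  · rw [merge_nil_left, merge_nil_left]
  rcases eq_or_ne ρ [] with rfl | hρ
  · rw [merge_nil_right, merge_nil_right]
  rcases τ with _ | ⟨t, ts⟩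
  · rw [merge_nil_left, merge_nil_right]
  have hτ := List.cons_ne_nil t ts
  rw [merge_of_ne_nil (merge_ne_nil hσ _) hρ, getLast?_merge σ hτ,
    merge_of_ne_nil hσ (merge_ne_nil hτ ρ), merge_of_ne_nil hσ hτ, merge_of_ne_nil hτ hρ]
  simp only [List.cons_append, List.head?_cons]
  by_cases h : σ.getLast? = some t <;> simp [h]

theorem isChain_merge {σ τ : List Bool} (hσ : σ.IsChain (· ≠ ·)) (hτ : τ.IsChain (· ≠ ·)) :
    (merge σ τ).IsChain (· ≠ ·) := by
  rcases eq_or_ne σ [] with rfl | hσ₀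
  · rwa [merge_nil_left]
  rcases τ with _ | ⟨t, ts⟩
  · rwa [merge_nil_right]
  rw [merge_of_ne_nil hσ₀ (List.cons_ne_nil t ts), List.isChain_append]
  refine ⟨hσ, ?_, ?_⟩
  · split_ifs
    · exact hτ.tail
    · exact hτ
  · intro x hx y hy
    split_ifs at hy with h
    · rw [List.tail_cons] at hy
      rw [Option.mem_def, h, List.head?_cons, Option.some_inj] at hx
      exact hx ▸ (List.isChain_cons.mp hτ).1 y hy
    · exact fun hxy => h (by rw [Option.mem_def.mp hx, Option.mem_def.mp hy, hxy])

theorem idemRels_of_mul_self (b : Bool) :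
    PresentedMonoid.of idemRels b * PresentedMonoid.of idemRels b =
      PresentedMonoid.of idemRels b :=
  PresentedMonoid.mk_eq_mk_of_rel <| by cases b <;> simp [idemRels]

namespace Theta1

instance : Monoid Theta1 where
  mul x y := ⟨merge x.1 y.1, isChain_merge x.2 y.2⟩
  one := ⟨[], List.isChain_nil⟩
  mul_assoc x y z := Subtype.ext (merge_assoc x.1 y.1 z.1)
  one_mul x := Subtype.ext (merge_nil_left x.1)
  mul_one x := Subtype.ext (merge_nil_right x.1)

def single (b : Bool) : Theta1 := ⟨[b], List.isChain_singleton b⟩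

theorem val_single_mul (b : Bool) (w : Theta1) :
    (single b * w).val = if w.val.head? = some b then w.val else b :: w.val :=
  merge_singleton b w.val

theorem single_mul_self (b : Bool) : single b * single b = single b :=
  Subtype.ext <| (val_single_mul b _).trans (if_pos rfl)

def ofPresented : PresentedMonoid idemRels →* Theta1 :=
  PresentedMonoid.lift single <| by
    rintro _ _ (⟨rfl, rfl⟩ | ⟨rfl, rfl⟩) <;> exact single_mul_self _

theorem ofPresented_of (b : Bool) : ofPresented (PresentedMonoid.of idemRels b) = single b := rfl

def toPresented (w : Theta1) : PresentedMonoid idemRels :=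
  PresentedMonoid.mk idemRels (FreeMonoid.ofList w.val)

theorem toPresented_single_mul (b : Bool) (w : Theta1) :
    toPresented (single b * w) = PresentedMonoid.of idemRels b * toPresented w := by
  unfold toPresented
  rw [val_single_mul]
  split_ifs with h
  · obtain ⟨t, ht⟩ := List.head?_eq_some_iff.mp h
    rw [ht, FreeMonoid.ofList_cons, map_mul, ← mul_assoc]
    exact congrArg (· * _) (idemRels_of_mul_self b).symm
  · rfl

theorem toPresented_ofPresented (x : PresentedMonoid idemRels) :
    toPresented (ofPresented x) = x := by
  induction x using PresentedMonoid.inductionOn with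
  | h u =>
    induction u using FreeMonoid.inductionOn' with
    | one => rfl
    | of_mul b u ih =>
      rw [map_mul]
      change toPresented (ofPresented (PresentedMonoid.of idemRels b * _)) =
        PresentedMonoid.of idemRels b * _
      rw [map_mul, ofPresented_of, toPresented_single_mul, ih]

theorem ofPresented_toPresented (w : Theta1) : ofPresented (toPresented w) = w := by
  obtain ⟨w, hw⟩ := w
  induction w with
  | nil => rfl
  | cons b t ih =>
    obtain ⟨hb, ht⟩ := List.isChain_cons.mp hw
    have hne : t.head? ≠ some b := fun h => hb b h rfl
    have hcons : toPresented ⟨b :: t, hw⟩ =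
        PresentedMonoid.of idemRels b * toPresented ⟨t, ht⟩ := rfl
    rw [hcons, map_mul, ofPresented_of, ih ht]
    exact Subtype.ext ((val_single_mul b _).trans (if_neg hne))

def presentedMonoidMulEquiv : PresentedMonoid idemRels ≃* Theta1 :=
  { ofPresented with
    invFun := toPresented
    left_inv := toPresented_ofPresented
    right_inv := ofPresented_toPresented }

end Theta1

/-- The monoid Θ¹ of alternating words under merge-concatenation is isomorphic, as a
monoid, to the monoid presented by two generators `a`, `b` subject to `a·a = a`,
`b·b = b`; the generators correspond to the two one-letter words and the identity
to the empty word. -/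
theorem theta1_iso_presentedMonoid :
    ∃ e : PresentedMonoid idemRels ≃ Theta1,
      (∀ x y : PresentedMonoid idemRels, (e (x * y)).val = merge (e x).val (e y).val) ∧
      (e (PresentedMonoid.of idemRels false)).val = [false] ∧
      (e (PresentedMonoid.of idemRels true)).val = [true] ∧
      (e 1).val = [] :=
  ⟨Theta1.presentedMonoidMulEquiv.toEquiv,
    fun x y => congrArg Subtype.val (map_mul Theta1.presentedMonoidMulEquiv x y), rfl, rfl, rfl⟩
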